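/- arXiv:math/0509675 — 10 statements merged into one kernel-verified Lean document; each statement's English description precedes it below -/
import Mathlib

section
/- The polynomial J vanishes identically in ℂ[t₁,t₂,t₃] if and only if λ₁₂λ₂₃ − λ₁₂λ₁₃ − λ₁₃λ₂₃ = −1. -/
open MvPolynomial

/-- `P lam a b = t_a² − t_b² + λ_{ab}(t_a − t_b)²` in ℂ[t₁,t₂,t₃],
where `lam a b` is the parameter `λ_{ab}`. -/
noncomputable def P (lam : Fin 3 → Fin 3 → ℂ) (a b : Fin 3) : MvPolynomial (Fin 3) ℂ :=
  X a ^ 2 - X b ^ 2 + C (lam a b) * (X a - X b) ^ 2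

/-- The bracket `{t_a, F} = Σ_{b ≠ a} (∂F/∂t_b)·P_{ab}`. -/
noncomputable def bracket (lam : Fin 3 → Fin 3 → ℂ) (a : Fin 3)
    (F : MvPolynomial (Fin 3) ℂ) : MvPolynomial (Fin 3) ℂ :=
  ∑ b ∈ Finset.univ.filter (· ≠ a), (pderiv b F) * P lam a b

/-- The Jacobiator `J = {t₁, P₂₃} + {t₂, P₃₁} + {t₃, P₁₂}`. -/
noncomputable def J (lam : Fin 3 → Fin 3 → ℂ) : MvPolynomial (Fin 3) ℂ :=
  bracket lam 0 (P lam 1 2) + bracket lam 1 (P lam 2 0) + bracket lam 2 (P lam 0 1)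

theorem X_sub_X_ne_zero {R σ : Type*} [CommRing R] [Nontrivial R] {i j : σ} (h : i ≠ j) :
    (X i - X j : MvPolynomial σ R) ≠ 0 :=
  sub_ne_zero.mpr (X_injective.ne h)

theorem J_eq_C_mul_vandermonde (lam : Fin 3 → Fin 3 → ℂ)
    (hanti : ∀ a b : Fin 3, lam b a = -lam a b) :
    J lam = C (2 * (lam 0 1 * lam 1 2 - lam 0 1 * lam 0 2 - lam 0 2 * lam 1 2 + 1)) *
      ((X 0 - X 1) * (X 1 - X 2) * (X 0 - X 2)) := by
  simp only [J, bracket, P, Finset.sum_filter, Fin.sum_univ_three, hanti 0 1, hanti 0 2,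
    hanti 1 2, map_add, map_sub, map_neg, map_mul, map_one, map_ofNat, Derivation.leibniz_pow,
    Derivation.leibniz, derivation_C, pderiv_X, Pi.single_apply, smul_eq_mul, nsmul_eq_mul,
    Fin.reduceEq, ne_eq, not_true, not_false_eq_true, if_true, if_false]
  ring

/-- The Jacobiator vanishes iff λ₁₂λ₂₃ − λ₁₂λ₁₃ − λ₁₃λ₂₃ = −1. -/
theorem jacobiator_eq_zero_iff (lam : Fin 3 → Fin 3 → ℂ)
    (hanti : ∀ a b : Fin 3, lam b a = -lam a b) :
    J lam = 0 ↔
      lam 0 1 * lam 1 2 - lam 0 1 * lam 0 2 - lam 0 2 * lam 1 2 = -1 := by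
  have hvandermonde : ((X 0 - X 1) * (X 1 - X 2) * (X 0 - X 2) : MvPolynomial (Fin 3) ℂ) ≠ 0 :=
    mul_ne_zero (mul_ne_zero (X_sub_X_ne_zero (by decide)) (X_sub_X_ne_zero (by decide)))
      (X_sub_X_ne_zero (by decide))
  rw [J_eq_C_mul_vandermonde lam hanti, mul_eq_zero_iff_right hvandermonde, C_eq_zero,
    mul_eq_zero, or_iff_right two_ne_zero, add_eq_zero_iff_eq_neg]
end

section
/- The following are equivalent: (a) for all pairwise distinct i, j, k ∈ I one has λ i j · λ j k − λ i j · λ i k − λ i k · λ j k = −1; (b) the relation i ≺ j :⟺ (i ≠ j and λ i j = 1) is transitive. -/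
/-- Let `λ : I → I → ℝ` be antisymmetric with `λ i j = ±1` for `i ≠ j`. Then
the Jacobi condition `λij·λjk − λij·λik − λik·λjk = −1` for all pairwise distinct
`i, j, k` is equivalent to transitivity of the relation `i ≺ j ⟺ i ≠ j ∧ λ i j = 1`. -/
theorem jacobi_iff_transitive {I : Type*} (lam : I → I → ℝ)
    (hanti : ∀ i j : I, lam i j = -lam j i)
    (hpm : ∀ i j : I, i ≠ j → lam i j = 1 ∨ lam i j = -1) :
    (∀ i j k : I, i ≠ j → j ≠ k → i ≠ k →
        lam i j * lam j k - lam i j * lam i k - lam i k * lam j k = -1) ↔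
      Transitive (fun i j : I => i ≠ j ∧ lam i j = 1) := by
  constructor
  · intro h i j k hij hjk
    obtain ⟨hij', h1⟩ := hij
    obtain ⟨hjk', h2⟩ := hjk
    have hik : i ≠ k := by
      rintro rfl
      have := hanti i j
      rw [h1, h2] at this; linarith
    refine ⟨hik, ?_⟩
    have := h i j k hij' hjk' hik
    rw [h1, h2] at this
    linarith
  · intro ht i j k hij hjk hik
    rcases hpm i j hij with h1 | h1 <;> rcases hpm j k hjk with h2 | h2 <;>
      rcases hpm i k hik with h3 | h3 <;> rw [h1, h2, h3] <;> try norm_num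
    · exfalso
      have hki := (ht ⟨hij, h1⟩ ⟨hjk, h2⟩).2
      rw [h3] at hki; linarith
    · exfalso
      have hji : lam j i = 1 := by rw [hanti j i, h1]; norm_num
      have hkj : lam k j = 1 := by rw [hanti k j, h2]; norm_num
      have hki := (ht ⟨hjk.symm, hkj⟩ ⟨hij.symm, hji⟩).2
      rw [hanti k i, h3] at hki; linarith
end

section
/- λ_ij·λ_jk − λ_ij·λ_ik − λ_ik·λ_jk = −1 holds if and only if φ_ik = (φ_ij + φ_jk)/(1 + φ_ij·φ_jk/c²), i.e. the parameters φ obey the Einstein velocity-addition law with limiting velocity c. -/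
/-!
Writing `φ = c / λ`, one has `φij φjk / c² = 1 / (λij λjk)`, so the Einstein sum of `φij` and `φjk`
simplifies to `c (λij + λjk) / (λij λjk + 1)`. Equating this with `φik = c / λik` and clearing the
nonzero denominators gives `λij λjk + 1 = λik (λij + λjk)`, which is the Jacobi condition.
-/

section EinsteinAddition

variable {K : Type*} [Field K]

def einsteinAdd (c u v : K) : K := (u + v) / (1 + u * v / c ^ 2)

theorem einsteinAdd_div_div {c a b : K} (hc : c ≠ 0) (ha : a ≠ 0) (hb : b ≠ 0) :
    einsteinAdd c (c / a) (c / b) = c * (a + b) / (a * b + 1) := by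
  rw [einsteinAdd]
  field_simp
  ring

theorem div_eq_einsteinAdd_div_div_iff {c a b x : K} (hc : c ≠ 0) (ha : a ≠ 0) (hb : b ≠ 0)
    (hx : x ≠ 0) (hab : a * b ≠ -1) :
    c / x = einsteinAdd c (c / a) (c / b) ↔ a * b - a * x - x * b = -1 := by
  have hab' : a * b + 1 ≠ 0 := fun h => hab (eq_neg_of_add_eq_zero_left h)
  rw [einsteinAdd_div_div hc ha hb, div_eq_div_iff hx hab', mul_assoc, mul_right_inj' hc]
  constructor <;> intro h <;> linear_combination h

end EinsteinAddition

theorem parameter_c_ne_zero {q : ℂ} (hq1 : q ^ 2 ≠ 1) (hq2 : q ^ 2 ≠ -1) :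
    Complex.I * (q ^ 2 + 1) / (q ^ 2 - 1) ≠ 0 :=
  div_ne_zero (mul_ne_zero Complex.I_ne_zero fun h => hq2 (eq_neg_of_add_eq_zero_left h))
    (sub_ne_zero.mpr hq1)

/-- With `c = i(q²+1)/(q²−1)` and `φ_ab = c/λ_ab`, the Jacobi condition
`λij·λjk − λij·λik − λik·λjk = −1` is equivalent to the Einstein
velocity-addition law `φik = (φij + φjk)/(1 + φij·φjk/c²)`. -/
theorem jacobi_iff_einstein_addition (q : ℂ) (hq1 : q ^ 2 ≠ 1) (hq2 : q ^ 2 ≠ -1)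
    (lamij lamik lamjk : ℂ) (hij : lamij ≠ 0) (hik : lamik ≠ 0) (hjk : lamjk ≠ 0)
    (hprod : lamij * lamjk ≠ -1)
    (c : ℂ) (hc : c = Complex.I * (q ^ 2 + 1) / (q ^ 2 - 1))
    (phiij phiik phijk : ℂ)
    (hphiij : phiij = c / lamij) (hphiik : phiik = c / lamik)
    (hphijk : phijk = c / lamjk) :
    lamij * lamjk - lamij * lamik - lamik * lamjk = -1 ↔
      phiik = (phiij + phijk) / (1 + phiij * phijk / c ^ 2) := by
  have hc0 : c ≠ 0 := hc ▸ parameter_c_ne_zero hq1 hq2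
  subst hphiij hphiik hphijk
  exact (div_eq_einsteinAdd_div_div_iff hc0 hij hjk hik hprod).symm
end

section
/- In the free unital associative ℂ-algebra ℂ⟨x, y⟩ on two generators one has the identity a·xy + b·x² + c·y² + d·yx = ((d−a)/2)·[ (yx − xy) − ((q²−1)/(q²+1))·( y² − x² − λ(x − y)² ) ]. -/
/-!
Expanding `(x - y)^2 = x² - xy - yx + y²` (without commuting `x` and `y`) writes the right-hand
side in the monomials `xy, x², y², yx`. With `κ = (q²-1)/(q²+1)` one has `κλ = (a+d)/(a-d)`, which
makes the coefficients of `xy` and `yx` equal to `a` and `d`; the coefficients of `x²` and `y²`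
come out as `-(aq²+d)/(q²+1)` and `-(a+dq²)/(q²+1)`, which are `b` and `c` by the two linear
conditions.
-/

theorem smul_commutator_sub_smul_eq {R A : Type*} [CommRing R] [Ring A] [Algebra R A]
    (x y : A) (s k l : R) :
    s • ((y * x - x * y) - k • (y ^ 2 - x ^ 2 - l • (x - y) ^ 2)) =
      (s * (-1 - k * l)) • (x * y) + (s * k * (1 + l)) • (x * x) +
        (s * k * (l - 1)) • (y * y) + (s * (1 - k * l)) • (y * x) := by
  have hsq : (x - y) ^ 2 = x * x - x * y - y * x + y * y := by
    rw [pow_two]; noncomm_ring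
  rw [hsq, pow_two, pow_two]
  module

section Coefficients

variable {K : Type*} [Field K] [NeZero (2 : K)] {q a b c d lam : K}

theorem coefficients_of_normal_form (hq1 : q ^ 2 ≠ 1) (hq2 : q ^ 2 ≠ -1) (had : a ≠ d)
    (h1 : a * q ^ 2 + b * (1 + q ^ 2) + d = 0)
    (h2 : a + c * (1 + q ^ 2) + d * q ^ 2 = 0)
    (hlam : lam = (q ^ 2 + 1) / (q ^ 2 - 1) * (a + d) / (a - d)) :
    let s := (d - a) / 2
    let k := (q ^ 2 - 1) / (q ^ 2 + 1)
    s * (-1 - k * lam) = a ∧ s * k * (1 + lam) = b ∧ s * k * (lam - 1) = c ∧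
      s * (1 - k * lam) = d := by
  intro s k
  have hminus : q ^ 2 - 1 ≠ 0 := sub_ne_zero.mpr hq1
  have hplus : q ^ 2 + 1 ≠ 0 := fun h => hq2 (eq_neg_of_add_eq_zero_left h)
  have had' : a - d ≠ 0 := sub_ne_zero.mpr had
  have hklam : k * lam = (a + d) / (a - d) := by
    simp only [k, hlam]
    field_simp
  refine ⟨?_, ?_, ?_, ?_⟩
  · simp only [s, hklam]; field_simp; ring
  · rw [show s * k * (1 + lam) = s * (k + k * lam) by ring, hklam]
    simp only [s, k]; field_simp; linear_combination 2 * (d - a) * h1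
  · rw [show s * k * (lam - 1) = s * (k * lam - k) by ring, hklam]
    simp only [s, k]; field_simp; linear_combination 2 * (d - a) * h2
  · simp only [s, hklam]; field_simp; ring

end Coefficients

theorem ideal_generator_normal_form_general (q a b c d lam : ℂ)
    (hq1 : q ^ 2 ≠ 1) (hq2 : q ^ 2 ≠ -1) (had : a ≠ d)
    (h1 : a * q ^ 2 + b * (1 + q ^ 2) + d = 0)
    (h2 : a + c * (1 + q ^ 2) + d * q ^ 2 = 0)
    (hlam : lam = (q ^ 2 + 1) / (q ^ 2 - 1) * (a + d) / (a - d)) :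
    let x : FreeAlgebra ℂ (Fin 2) := FreeAlgebra.ι ℂ 0
    let y : FreeAlgebra ℂ (Fin 2) := FreeAlgebra.ι ℂ 1
    a • (x * y) + b • (x * x) + c • (y * y) + d • (y * x) =
      ((d - a) / 2) • ((y * x - x * y) -
        ((q ^ 2 - 1) / (q ^ 2 + 1)) • (y ^ 2 - x ^ 2 - lam • (x - y) ^ 2)) := by
  intro x y
  obtain ⟨hxy, hxx, hyy, hyx⟩ := coefficients_of_normal_form hq1 hq2 had h1 h2 hlam
  rw [smul_commutator_sub_smul_eq, hxy, hxx, hyy, hyx]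

/-- In the free algebra ℂ⟨x,y⟩, under the linear conditions on `a,b,c,d`,
the generator `a·xy + b·x² + c·y² + d·yx` of the ideal is a multiple of
`[y,x] − ((q²−1)/(q²+1))(y² − x² − λ(x−y)²)` with
`λ = ((q²+1)/(q²−1))·(a+d)/(a−d)`. -/
theorem ideal_generator_normal_form (q a b c d lam : ℂ)
    (hq0 : q ≠ 0) (hq1 : q ^ 2 ≠ 1) (hq2 : q ^ 2 ≠ -1) (had : a ≠ d)
    (h1 : a * q ^ 2 + b * (1 + q ^ 2) + d = 0)
    (h2 : a + c * (1 + q ^ 2) + d * q ^ 2 = 0)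
    (hlam : lam = (q ^ 2 + 1) / (q ^ 2 - 1) * (a + d) / (a - d)) :
    let x : FreeAlgebra ℂ (Fin 2) := FreeAlgebra.ι ℂ 0
    let y : FreeAlgebra ℂ (Fin 2) := FreeAlgebra.ι ℂ 1
    a • (x * y) + b • (x * x) + c • (y * y) + d • (y * x) =
      ((d - a) / 2) • ((y * x - x * y) -
        ((q ^ 2 - 1) / (q ^ 2 + 1)) • (y ^ 2 - x ^ 2 - lam • (x - y) ^ 2)) :=
  ideal_generator_normal_form_general q a b c d lam hq1 hq2 had h1 h2 hlam
end

section
/- Under the relation yx = αxy + βx² + γy², the following identity holds in R: (1 − βγ)·y²x = β²(1+α)·x³ + αβ(1+α)·x²y + (α² + αβγ)·xy² + γ(1+α)·y³. -/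
/-- Under the relation `yx = αxy + βx² + γy²` in a ℂ-algebra `R`, one has
`(1 − βγ)·y²x = β²(1+α)·x³ + αβ(1+α)·x²y + (α² + αβγ)·xy² + γ(1+α)·y³`. -/
theorem reduction_degree_three {R : Type*} [Ring R] [Algebra ℂ R]
    (α β γ : ℂ) (x y : R)
    (h : y * x = α • (x * y) + β • (x * x) + γ • (y * y)) :
    (1 - β * γ) • (y ^ 2 * x) =
      (β ^ 2 * (1 + α)) • x ^ 3 + (α * β * (1 + α)) • (x ^ 2 * y) +
        (α ^ 2 + α * β * γ) • (x * y ^ 2) + (γ * (1 + α)) • y ^ 3 := by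
  have hxyx : x * (y * x) = α • (x * (x * y)) + β • (x * (x * x)) + γ • (x * (y * y)) := by
    rw [h]; simp [mul_add, mul_smul_comm]
  have h1 : y * (y * x) = α • ((y * x) * y) + β • ((y * x) * x) + γ • (y * (y * y)) := by
    conv_lhs => rw [h]
    simp [mul_add, mul_smul_comm, mul_assoc]
  have h2 : (y * x) * y = α • (x * (y * y)) + β • (x * (x * y)) + γ • (y * (y * y)) := by
    conv_lhs => rw [h]
    simp [add_mul, smul_mul_assoc, mul_assoc]
  have h3 : (y * x) * x = α • (x * (y * x)) + β • (x * (x * x)) + γ • (y * (y * x)) := by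
    conv_lhs => rw [h]
    simp [add_mul, smul_mul_assoc, mul_assoc]
  rw [hxyx] at h3
  rw [h2, h3] at h1
  have hrw : y ^ 2 * x = y * (y * x) := by rw [pow_two, mul_assoc]
  have hx3 : x ^ 3 = x * (x * x) := by rw [pow_succ, pow_two, mul_assoc]
  have hy3 : y ^ 3 = y * (y * y) := by rw [pow_succ, pow_two, mul_assoc]
  have hx2y : x ^ 2 * y = x * (x * y) := by rw [pow_two, mul_assoc]
  have hxy2 : x * y ^ 2 = x * (y * y) := by rw [pow_two]
  rw [hrw, hx3, hy3, hx2y, hxy2]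
  linear_combination (norm := module) h1
end

section
/- In the free algebra ℂ⟨x₁,x₂,x₃⟩, the element X₁₂₃ := −α₂₃α₁₃·X₁₂x₃ − α₂₃·x₂X₁₃ − X₂₃x₁ + x₃X₁₂ + α₁₂·X₁₃x₂ + α₁₃α₁₂·x₁X₂₃ lies in the ℂ-linear span of the degree-three monomials that involve at most two distinct generators; equivalently, the coefficient of every monomial x_{σ(1)}x_{σ(2)}x_{σ(3)} (σ a permutation of {1,2,3}) in X₁₂₃ is zero. -/
open FreeAlgebra

/-- In ℂ⟨x₁,x₂,x₃⟩, with `X_{ab} := α_{ab}·x_a x_b + β_{ab}·x_a² + γ_{ab}·x_b² − x_b x_a`,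
the combination
`X₁₂₃ = −α₂₃α₁₃·X₁₂x₃ − α₂₃·x₂X₁₃ − X₂₃x₁ + x₃X₁₂ + α₁₂·X₁₃x₂ + α₁₃α₁₂·x₁X₂₃`
lies in the ℂ-span of the degree-three monomials involving at most two distinct
generators (all monomials `x_a x_b x_c` with three pairwise distinct indices cancel). -/
theorem X123_in_span_two_variable_monomials
    (α β γ : Fin 3 → Fin 3 → ℂ) :
    let x : Fin 3 → FreeAlgebra ℂ (Fin 3) := fun a => FreeAlgebra.ι ℂ a
    let X : Fin 3 → Fin 3 → FreeAlgebra ℂ (Fin 3) := fun a b =>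
      α a b • (x a * x b) + β a b • (x a ^ 2) + γ a b • (x b ^ 2) - x b * x a
    (-(α 1 2 * α 0 2)) • (X 0 1 * x 2) - α 1 2 • (x 1 * X 0 2) - X 1 2 * x 0 +
        x 2 * X 0 1 + α 0 1 • (X 0 2 * x 1) + (α 0 2 * α 0 1) • (x 0 * X 1 2) ∈
      Submodule.span ℂ
        {w : FreeAlgebra ℂ (Fin 3) |
          ∃ a b c : Fin 3, (a = b ∨ b = c ∨ a = c) ∧ w = x a * x b * x c} := by
  intro x X
  have key :
      (-(α 1 2 * α 0 2)) • (X 0 1 * x 2) - α 1 2 • (x 1 * X 0 2) - X 1 2 * x 0 +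
        x 2 * X 0 1 + α 0 1 • (X 0 2 * x 1) + (α 0 2 * α 0 1) • (x 0 * X 1 2) =
      (-(α 1 2 * α 0 2 * β 0 1)) • (x 0 * x 0 * x 2)
        + (-(α 1 2 * α 0 2 * γ 0 1)) • (x 1 * x 1 * x 2)
        + (-(α 1 2 * β 0 2)) • (x 1 * x 0 * x 0)
        + (-(α 1 2 * γ 0 2)) • (x 1 * x 2 * x 2)
        + (-(β 1 2)) • (x 1 * x 1 * x 0)
        + (-(γ 1 2)) • (x 2 * x 2 * x 0)
        + β 0 1 • (x 2 * x 0 * x 0)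
        + γ 0 1 • (x 2 * x 1 * x 1)
        + (α 0 1 * β 0 2) • (x 0 * x 0 * x 1)
        + (α 0 1 * γ 0 2) • (x 2 * x 2 * x 1)
        + (α 0 2 * α 0 1 * β 1 2) • (x 0 * x 1 * x 1)
        + (α 0 2 * α 0 1 * γ 1 2) • (x 0 * x 2 * x 2) := by
    simp only [X, pow_two, smul_add, smul_sub, smul_smul, mul_smul_comm, smul_mul_assoc,
      sub_mul, add_mul, mul_sub, mul_add, mul_assoc]
    module
  rw [key]
  have hmem : ∀ (k : ℂ) (a b c : Fin 3), (a = b ∨ b = c ∨ a = c) →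
      k • (x a * x b * x c) ∈ Submodule.span ℂ
        {w : FreeAlgebra ℂ (Fin 3) |
          ∃ a b c : Fin 3, (a = b ∨ b = c ∨ a = c) ∧ w = x a * x b * x c} := by
    intro k a b c h
    exact Submodule.smul_mem _ _ (Submodule.subset_span ⟨a, b, c, h, rfl⟩)
  refine add_mem (add_mem (add_mem (add_mem (add_mem (add_mem (add_mem (add_mem
    (add_mem (add_mem (add_mem ?_ ?_) ?_) ?_) ?_) ?_) ?_) ?_) ?_) ?_) ?_) ?_ <;>
    apply hmem <;> decide
end

section
/- All nine coefficients p₁, …, p₉ vanish if and only if λ₁₂ = λ₁₃ = λ₂₃ = (1+q²)/(1−q²). -/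
/-- All nine coefficients `p₁, …, p₉` of Lemma 3 vanish iff
`λ₁₂ = λ₁₃ = λ₂₃ = (1+q²)/(1−q²)`. -/
theorem all_p_vanish_iff (q lam12 lam13 lam23 : ℂ) (hq0 : q ≠ 0) (hq4 : q ^ 4 ≠ 1)
    (l12 l13 l23 m12 m13 m23 K : ℂ)
    (hl12 : l12 = 1 + q ^ 4 + lam12 * (1 - q ^ 4))
    (hl13 : l13 = 1 + q ^ 4 + lam13 * (1 - q ^ 4))
    (hl23 : l23 = 1 + q ^ 4 + lam23 * (1 - q ^ 4))
    (hl12' : l12 ≠ 0) (hl13' : l13 ≠ 0) (hl23' : l23 ≠ 0)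
    (hm12 : m12 = 1 + q ^ 2 + lam12 * (q ^ 2 - 1))
    (hm13 : m13 = 1 + q ^ 2 + lam13 * (q ^ 2 - 1))
    (hm23 : m23 = 1 + q ^ 2 + lam23 * (q ^ 2 - 1))
    (hK : K = -(1 + q ^ 2 + q ^ 4 + q ^ 6) + lam12 * (1 - q ^ 2 + q ^ 4 + q ^ 6) +
        lam23 * (-1 - q ^ 2 + q ^ 4 - q ^ 6) +
        lam12 * lam23 * (1 - q ^ 2 - q ^ 4 + q ^ 6))
    (p1 p2 p3 p4 p5 p6 p7 p8 p9 : ℂ)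
    (hp1 : p1 = 4 * (lam12 - lam13) * q ^ 6 * (q ^ 2 - 1) / (l12 * l13))
    (hp2 : p2 = -2 * (q ^ 2 - 1) * K / (l12 * l23))
    (hp3 : p3 = 4 * (lam13 - lam23) * (q ^ 2 - 1) / (l13 * l23))
    (hp4 : p4 = -2 * m12 * q ^ 2 / l12)
    (hp5 : p5 = 2 * m12 / l12)
    (hp6 : p6 = 2 * m13 * q ^ 2 / l13)
    (hp7 : p7 = -2 * m13 / l13)
    (hp8 : p8 = -2 * m23 * q ^ 2 / l23)
    (hp9 : p9 = 2 * m23 / l23) :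
    (p1 = 0 ∧ p2 = 0 ∧ p3 = 0 ∧ p4 = 0 ∧ p5 = 0 ∧ p6 = 0 ∧ p7 = 0 ∧ p8 = 0 ∧ p9 = 0) ↔
      (lam12 = (1 + q ^ 2) / (1 - q ^ 2) ∧ lam13 = (1 + q ^ 2) / (1 - q ^ 2) ∧
        lam23 = (1 + q ^ 2) / (1 - q ^ 2)) := by
  have hq2 : (1 : ℂ) - q ^ 2 ≠ 0 := by
    intro h
    exact hq4 (by linear_combination (-(q ^ 2) - 1) * h)
  constructor
  · rintro ⟨_, _, _, _, h5, _, h7, _, h9⟩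
    have hm12z : m12 = 0 := by
      rw [hp5, div_eq_zero_iff] at h5
      rcases h5 with h5 | h5
      · linear_combination h5 / 2
      · exact absurd h5 hl12'
    have hm13z : m13 = 0 := by
      rw [hp7, div_eq_zero_iff] at h7
      rcases h7 with h7 | h7
      · linear_combination -h7 / 2
      · exact absurd h7 hl13'
    have hm23z : m23 = 0 := by
      rw [hp9, div_eq_zero_iff] at h9
      rcases h9 with h9 | h9
      · linear_combination h9 / 2
      · exact absurd h9 hl23'
    rw [hm12] at hm12z; rw [hm13] at hm13z; rw [hm23] at hm23z
    refine ⟨?_, ?_, ?_⟩ <;> rw [eq_div_iff hq2]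
    · linear_combination -hm12z
    · linear_combination -hm13z
    · linear_combination -hm23z
  · rintro ⟨h12, h13, h23⟩
    have hm12z : m12 = 0 := by
      rw [hm12, h12]; field_simp; ring
    have hm13z : m13 = 0 := by
      rw [hm13, h13]; field_simp; ring
    have hm23z : m23 = 0 := by
      rw [hm23, h23]; field_simp; ring
    have hKz : K = 0 := by
      rw [hK, h12, h23]; field_simp; ring
    refine ⟨?_, ?_, ?_, ?_, ?_, ?_, ?_, ?_, ?_⟩
    · rw [hp1, h12, h13]; simp
    · rw [hp2, hKz]; simp
    · rw [hp3, h13, h23]; simp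
    · rw [hp4, hm12z]; simp
    · rw [hp5, hm12z]; simp
    · rw [hp6, hm13z]; simp
    · rw [hp7, hm13z]; simp
    · rw [hp8, hm23z]; simp
    · rw [hp9, hm23z]; simp
end

section
/- The elements v₁, v₂, v₃ satisfy the three relations [v_j, v_i] = ((q²−1)/(q²+1))·(v_j² − v_i² − λ_{ij}(v_i − v_j)²) for (i,j) ∈ {(1,2),(1,3),(2,3)} if and only if u₁, u₂, u₃ satisfy the three relations u₂u₁ = q⁻²·u₁u₂, u₃u₁ = q⁻²·u₁u₃ + (q⁻²−1)(λ₁₂−1)(λ₂₃+1)·u₂², and u₃u₂ = q⁻²·u₂u₃. -/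
private lemma comb_aux {R : Type*} [Ring R] [Algebra ℂ R] {x1 y1 x2 y2 x3 y3 X Y : R}
    (s1 s2 s3 : ℂ) (h1 : x1 = y1) (h2 : x2 = y2) (h3 : x3 = y3)
    (key : X - Y = s1 • (x1 - y1) + s2 • (x2 - y2) + s3 • (x3 - y3)) : X = Y := by
  rw [sub_eq_zero_of_eq h1, sub_eq_zero_of_eq h2, sub_eq_zero_of_eq h3,
    smul_zero, smul_zero, smul_zero, add_zero, add_zero] at key
  exact sub_eq_zero.mp key

private lemma comb_aux2 {R : Type*} [Ring R] [Algebra ℂ R] {x1 y1 x2 y2 x3 y3 X Y : R}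
    {s : ℂ} (hs : s ≠ 0) (s1 s2 s3 : ℂ) (h1 : x1 = y1) (h2 : x2 = y2) (h3 : x3 = y3)
    (key : s • (X - Y) = s1 • (x1 - y1) + s2 • (x2 - y2) + s3 • (x3 - y3)) : X = Y := by
  rw [sub_eq_zero_of_eq h1, sub_eq_zero_of_eq h2, sub_eq_zero_of_eq h3,
    smul_zero, smul_zero, smul_zero, add_zero, add_zero] at key
  have : X - Y = s⁻¹ • (s • (X - Y)) := (inv_smul_smul₀ hs _).symm
  rw [key, smul_zero] at this
  exact sub_eq_zero.mp this

set_option maxHeartbeats 2000000 in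
private lemma key_f1 {R : Type*} [Ring R] [Algebra ℂ R] (q a b : ℂ)
    (v1 v2 v3 : R) :
    (q ^ 2 • (((-(a + 1)) • v1 + (a + b) • v2 - (b - 1) • v3) * ((a - 1) • v1 - (a + b) • v2 + (b + 1) • v3)) - ((a - 1) • v1 - (a + b) • v2 + (b + 1) • v3) * ((-(a + 1)) • v1 + (a + b) • v2 - (b - 1) • v3)) =
    (-(a + b)) • ((q ^ 2 + 1) • (v2 * v1 - v1 * v2) - (q ^ 2 - 1) • (v2 ^ 2 - v1 ^ 2 - a • (v1 - v2) ^ 2)) +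
    (1 : ℂ) • (((q ^ 2 + 1) * (a + b)) • (v3 * v1 - v1 * v3) - (q ^ 2 - 1) • ((a + b) • (v3 ^ 2 - v1 ^ 2) - (1 + a * b) • (v1 - v3) ^ 2)) +
    (-(a + b)) • ((q ^ 2 + 1) • (v3 * v2 - v2 * v3) - (q ^ 2 - 1) • (v3 ^ 2 - v2 ^ 2 - b • (v2 - v3) ^ 2)) := by
  simp only [pow_two, sub_mul, mul_sub, add_mul, mul_add, neg_mul, mul_neg,
    smul_mul_assoc, mul_smul_comm, smul_smul, smul_sub, smul_add, smul_neg, neg_smul]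
  match_scalars <;> ring

set_option maxHeartbeats 2000000 in
private lemma key_f2 {R : Type*} [Ring R] [Algebra ℂ R] (q a b : ℂ)
    (v1 v2 v3 : R) :
    (q ^ 2 • ((((a + 1) ^ 2 * (b + 1)) • v1 - ((a + b) * (a - 1) * (b + 1)) • v2 + ((b - 1) ^ 2 * (a - 1)) • v3) * ((a - 1) • v1 - (a + b) • v2 + (b + 1) • v3)) - (((a - 1) • v1 - (a + b) • v2 + (b + 1) • v3) * (((a + 1) ^ 2 * (b + 1)) • v1 - ((a + b) * (a - 1) * (b + 1)) • v2 + ((b - 1) ^ 2 * (a - 1)) • v3) + ((1 - q ^ 2) * (a - 1) * (b + 1)) • ((-(a + 1)) • v1 + (a + b) • v2 - (b - 1) • v3) ^ 2)) =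
    (2 * a * (a + b) * (b + 1)) • ((q ^ 2 + 1) • (v2 * v1 - v1 * v2) - (q ^ 2 - 1) • (v2 ^ 2 - v1 ^ 2 - a • (v1 - v2) ^ 2)) +
    (-2 * (a * b + 1)) • (((q ^ 2 + 1) * (a + b)) • (v3 * v1 - v1 * v3) - (q ^ 2 - 1) • ((a + b) • (v3 ^ 2 - v1 ^ 2) - (1 + a * b) • (v1 - v3) ^ 2)) +
    (2 * b * (a + b) * (a - 1)) • ((q ^ 2 + 1) • (v3 * v2 - v2 * v3) - (q ^ 2 - 1) • (v3 ^ 2 - v2 ^ 2 - b • (v2 - v3) ^ 2)) := by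
  simp only [pow_two, sub_mul, mul_sub, add_mul, mul_add, neg_mul, mul_neg,
    smul_mul_assoc, mul_smul_comm, smul_smul, smul_sub, smul_add, smul_neg, neg_smul]
  match_scalars <;> ring

set_option maxHeartbeats 2000000 in
private lemma key_f3 {R : Type*} [Ring R] [Algebra ℂ R] (q a b : ℂ)
    (v1 v2 v3 : R) :
    (q ^ 2 • ((((a + 1) ^ 2 * (b + 1)) • v1 - ((a + b) * (a - 1) * (b + 1)) • v2 + ((b - 1) ^ 2 * (a - 1)) • v3) * ((-(a + 1)) • v1 + (a + b) • v2 - (b - 1) • v3)) - ((-(a + 1)) • v1 + (a + b) • v2 - (b - 1) • v3) * (((a + 1) ^ 2 * (b + 1)) • v1 - ((a + b) * (a - 1) * (b + 1)) • v2 + ((b - 1) ^ 2 * (a - 1)) • v3)) =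
    (-(a + b) * (a + 1) * (b + 1)) • ((q ^ 2 + 1) • (v2 * v1 - v1 * v2) - (q ^ 2 - 1) • (v2 ^ 2 - v1 ^ 2 - a • (v1 - v2) ^ 2)) +
    ((a + 1) * (b - 1)) • (((q ^ 2 + 1) * (a + b)) • (v3 * v1 - v1 * v3) - (q ^ 2 - 1) • ((a + b) • (v3 ^ 2 - v1 ^ 2) - (1 + a * b) • (v1 - v3) ^ 2)) +
    (-(a + b) * (a - 1) * (b - 1)) • ((q ^ 2 + 1) • (v3 * v2 - v2 * v3) - (q ^ 2 - 1) • (v3 ^ 2 - v2 ^ 2 - b • (v2 - v3) ^ 2)) := by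
  simp only [pow_two, sub_mul, mul_sub, add_mul, mul_add, neg_mul, mul_neg,
    smul_mul_assoc, mul_smul_comm, smul_smul, smul_sub, smul_add, smul_neg, neg_smul]
  match_scalars <;> ring

set_option maxHeartbeats 2000000 in
private lemma key_b1 {R : Type*} [Ring R] [Algebra ℂ R] (q a b : ℂ)
    (v1 v2 v3 : R) :
    (4 * (a + b) ^ 2) • ((q ^ 2 + 1) • (v2 * v1 - v1 * v2) - (q ^ 2 - 1) • (v2 ^ 2 - v1 ^ 2 - a • (v1 - v2) ^ 2)) =
    (-(a - 1) * (b - 1) ^ 2) • (q ^ 2 • (((-(a + 1)) • v1 + (a + b) • v2 - (b - 1) • v3) * ((a - 1) • v1 - (a + b) • v2 + (b + 1) • v3)) - ((a - 1) • v1 - (a + b) • v2 + (b + 1) • v3) * ((-(a + 1)) • v1 + (a + b) • v2 - (b - 1) • v3)) +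
    (-(b - 1)) • (q ^ 2 • ((((a + 1) ^ 2 * (b + 1)) • v1 - ((a + b) * (a - 1) * (b + 1)) • v2 + ((b - 1) ^ 2 * (a - 1)) • v3) * ((a - 1) • v1 - (a + b) • v2 + (b + 1) • v3)) - (((a - 1) • v1 - (a + b) • v2 + (b + 1) • v3) * (((a + 1) ^ 2 * (b + 1)) • v1 - ((a + b) * (a - 1) * (b + 1)) • v2 + ((b - 1) ^ 2 * (a - 1)) • v3) + ((1 - q ^ 2) * (a - 1) * (b + 1)) • ((-(a + 1)) • v1 + (a + b) • v2 - (b - 1) • v3) ^ 2)) +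
    (-(b + 1)) • (q ^ 2 • ((((a + 1) ^ 2 * (b + 1)) • v1 - ((a + b) * (a - 1) * (b + 1)) • v2 + ((b - 1) ^ 2 * (a - 1)) • v3) * ((-(a + 1)) • v1 + (a + b) • v2 - (b - 1) • v3)) - ((-(a + 1)) • v1 + (a + b) • v2 - (b - 1) • v3) * (((a + 1) ^ 2 * (b + 1)) • v1 - ((a + b) * (a - 1) * (b + 1)) • v2 + ((b - 1) ^ 2 * (a - 1)) • v3)) := by
  simp only [pow_two, sub_mul, mul_sub, add_mul, mul_add, neg_mul, mul_neg,
    smul_mul_assoc, mul_smul_comm, smul_smul, smul_sub, smul_add, smul_neg, neg_smul]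
  match_scalars <;> ring

set_option maxHeartbeats 2000000 in
private lemma key_b2 {R : Type*} [Ring R] [Algebra ℂ R] (q a b : ℂ)
    (v1 v2 v3 : R) :
    (4 : ℂ) • (((q ^ 2 + 1) * (a + b)) • (v3 * v1 - v1 * v3) - (q ^ 2 - 1) • ((a + b) • (v3 ^ 2 - v1 ^ 2) - (1 + a * b) • (v1 - v3) ^ 2)) =
    (-(a - 1) * (b + 1)) • (q ^ 2 • (((-(a + 1)) • v1 + (a + b) • v2 - (b - 1) • v3) * ((a - 1) • v1 - (a + b) • v2 + (b + 1) • v3)) - ((a - 1) • v1 - (a + b) • v2 + (b + 1) • v3) * ((-(a + 1)) • v1 + (a + b) • v2 - (b - 1) • v3)) +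
    (-1 : ℂ) • (q ^ 2 • ((((a + 1) ^ 2 * (b + 1)) • v1 - ((a + b) * (a - 1) * (b + 1)) • v2 + ((b - 1) ^ 2 * (a - 1)) • v3) * ((a - 1) • v1 - (a + b) • v2 + (b + 1) • v3)) - (((a - 1) • v1 - (a + b) • v2 + (b + 1) • v3) * (((a + 1) ^ 2 * (b + 1)) • v1 - ((a + b) * (a - 1) * (b + 1)) • v2 + ((b - 1) ^ 2 * (a - 1)) • v3) + ((1 - q ^ 2) * (a - 1) * (b + 1)) • ((-(a + 1)) • v1 + (a + b) • v2 - (b - 1) • v3) ^ 2)) +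
    (-1 : ℂ) • (q ^ 2 • ((((a + 1) ^ 2 * (b + 1)) • v1 - ((a + b) * (a - 1) * (b + 1)) • v2 + ((b - 1) ^ 2 * (a - 1)) • v3) * ((-(a + 1)) • v1 + (a + b) • v2 - (b - 1) • v3)) - ((-(a + 1)) • v1 + (a + b) • v2 - (b - 1) • v3) * (((a + 1) ^ 2 * (b + 1)) • v1 - ((a + b) * (a - 1) * (b + 1)) • v2 + ((b - 1) ^ 2 * (a - 1)) • v3)) := by
  simp only [pow_two, sub_mul, mul_sub, add_mul, mul_add, neg_mul, mul_neg,
    smul_mul_assoc, mul_smul_comm, smul_smul, smul_sub, smul_add, smul_neg, neg_smul]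
  match_scalars <;> ring

set_option maxHeartbeats 2000000 in
private lemma key_b3 {R : Type*} [Ring R] [Algebra ℂ R] (q a b : ℂ)
    (v1 v2 v3 : R) :
    (4 * (a + b) ^ 2) • ((q ^ 2 + 1) • (v3 * v2 - v2 * v3) - (q ^ 2 - 1) • (v3 ^ 2 - v2 ^ 2 - b • (v2 - v3) ^ 2)) =
    (-(a + 1) ^ 2 * (b + 1)) • (q ^ 2 • (((-(a + 1)) • v1 + (a + b) • v2 - (b - 1) • v3) * ((a - 1) • v1 - (a + b) • v2 + (b + 1) • v3)) - ((a - 1) • v1 - (a + b) • v2 + (b + 1) • v3) * ((-(a + 1)) • v1 + (a + b) • v2 - (b - 1) • v3)) +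
    (-(a + 1)) • (q ^ 2 • ((((a + 1) ^ 2 * (b + 1)) • v1 - ((a + b) * (a - 1) * (b + 1)) • v2 + ((b - 1) ^ 2 * (a - 1)) • v3) * ((a - 1) • v1 - (a + b) • v2 + (b + 1) • v3)) - (((a - 1) • v1 - (a + b) • v2 + (b + 1) • v3) * (((a + 1) ^ 2 * (b + 1)) • v1 - ((a + b) * (a - 1) * (b + 1)) • v2 + ((b - 1) ^ 2 * (a - 1)) • v3) + ((1 - q ^ 2) * (a - 1) * (b + 1)) • ((-(a + 1)) • v1 + (a + b) • v2 - (b - 1) • v3) ^ 2)) +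
    (-(a - 1)) • (q ^ 2 • ((((a + 1) ^ 2 * (b + 1)) • v1 - ((a + b) * (a - 1) * (b + 1)) • v2 + ((b - 1) ^ 2 * (a - 1)) • v3) * ((-(a + 1)) • v1 + (a + b) • v2 - (b - 1) • v3)) - ((-(a + 1)) • v1 + (a + b) • v2 - (b - 1) • v3) * (((a + 1) ^ 2 * (b + 1)) • v1 - ((a + b) * (a - 1) * (b + 1)) • v2 + ((b - 1) ^ 2 * (a - 1)) • v3)) := by
  simp only [pow_two, sub_mul, mul_sub, add_mul, mul_add, neg_mul, mul_neg,
    smul_mul_assoc, mul_smul_comm, smul_smul, smul_sub, smul_add, smul_neg, neg_smul]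
  match_scalars <;> ring

set_option maxHeartbeats 2000000 in
/-- Lemma 6: the defining relations of the three-point algebra in the generators
`v₁, v₂, v₃` are equivalent to quasi-plane relations in the transformed
generators `u₁, u₂, u₃`. -/
theorem three_point_relations_iff {R : Type*} [Ring R] [Algebra ℂ R]
    (q lam12 lam23 lam13 : ℂ) (hq0 : q ≠ 0) (hq2 : q ^ 2 ≠ -1)
    (hsum : lam12 + lam23 ≠ 0)
    (hlam13 : lam13 = (1 + lam12 * lam23) / (lam12 + lam23))
    (v1 v2 v3 u1 u2 u3 : R)
    (hu1 : u1 = (lam12 - 1) • v1 - (lam12 + lam23) • v2 + (lam23 + 1) • v3)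
    (hu2 : u2 = (-(lam12 + 1)) • v1 + (lam12 + lam23) • v2 - (lam23 - 1) • v3)
    (hu3 : u3 = ((lam12 + 1) ^ 2 * (lam23 + 1)) • v1 -
        ((lam12 + lam23) * (lam12 - 1) * (lam23 + 1)) • v2 +
        ((lam23 - 1) ^ 2 * (lam12 - 1)) • v3) :
    ((v2 * v1 - v1 * v2 =
        ((q ^ 2 - 1) / (q ^ 2 + 1)) •
          (v2 ^ 2 - v1 ^ 2 - lam12 • (v1 - v2) ^ 2)) ∧
      (v3 * v1 - v1 * v3 =
        ((q ^ 2 - 1) / (q ^ 2 + 1)) •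
          (v3 ^ 2 - v1 ^ 2 - lam13 • (v1 - v3) ^ 2)) ∧
      (v3 * v2 - v2 * v3 =
        ((q ^ 2 - 1) / (q ^ 2 + 1)) •
          (v3 ^ 2 - v2 ^ 2 - lam23 • (v2 - v3) ^ 2))) ↔
    ((u2 * u1 = (q ^ 2)⁻¹ • (u1 * u2)) ∧
      (u3 * u1 = (q ^ 2)⁻¹ • (u1 * u3) +
        (((q ^ 2)⁻¹ - 1) * (lam12 - 1) * (lam23 + 1)) • (u2 ^ 2)) ∧
      (u3 * u2 = (q ^ 2)⁻¹ • (u2 * u3))) := by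
  subst hlam13 hu1 hu2 hu3
  have ht : (q ^ 2 : ℂ) ≠ 0 := pow_ne_zero 2 hq0
  have ht1 : (q ^ 2 + 1 : ℂ) ≠ 0 := fun h => hq2 (by linear_combination h)
  -- fraction-free rewriting of the six relations
  have e1 : ((q ^ 2 - 1) / (q ^ 2 + 1)) • (v2 ^ 2 - v1 ^ 2 - lam12 • (v1 - v2) ^ 2) =
      (q ^ 2 + 1)⁻¹ • ((q ^ 2 - 1) • (v2 ^ 2 - v1 ^ 2 - lam12 • (v1 - v2) ^ 2)) := by
    rw [smul_smul]; congr 1; field_simp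
  have e2 : ((q ^ 2 - 1) / (q ^ 2 + 1)) • (v3 ^ 2 - v1 ^ 2 -
        ((1 + lam12 * lam23) / (lam12 + lam23)) • (v1 - v3) ^ 2) =
      ((q ^ 2 + 1) * (lam12 + lam23))⁻¹ • ((q ^ 2 - 1) •
        ((lam12 + lam23) • (v3 ^ 2 - v1 ^ 2) - (1 + lam12 * lam23) • (v1 - v3) ^ 2)) := by
    match_scalars <;> field_simp <;> ring
  have e3 : ((q ^ 2 - 1) / (q ^ 2 + 1)) • (v3 ^ 2 - v2 ^ 2 - lam23 • (v2 - v3) ^ 2) =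
      (q ^ 2 + 1)⁻¹ • ((q ^ 2 - 1) • (v3 ^ 2 - v2 ^ 2 - lam23 • (v2 - v3) ^ 2)) := by
    rw [smul_smul]; congr 1; field_simp
  have e5 : (q ^ 2)⁻¹ • (((lam12 - 1) • v1 - (lam12 + lam23) • v2 + (lam23 + 1) • v3) *
        (((lam12 + 1) ^ 2 * (lam23 + 1)) • v1 -
          ((lam12 + lam23) * (lam12 - 1) * (lam23 + 1)) • v2 +
          ((lam23 - 1) ^ 2 * (lam12 - 1)) • v3)) +
      (((q ^ 2)⁻¹ - 1) * (lam12 - 1) * (lam23 + 1)) •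
        (((-(lam12 + 1)) • v1 + (lam12 + lam23) • v2 - (lam23 - 1) • v3) ^ 2) =
      (q ^ 2)⁻¹ • ((((lam12 - 1) • v1 - (lam12 + lam23) • v2 + (lam23 + 1) • v3) *
        (((lam12 + 1) ^ 2 * (lam23 + 1)) • v1 -
          ((lam12 + lam23) * (lam12 - 1) * (lam23 + 1)) • v2 +
          ((lam23 - 1) ^ 2 * (lam12 - 1)) • v3)) +
        ((1 - q ^ 2) * (lam12 - 1) * (lam23 + 1)) •
          (((-(lam12 + 1)) • v1 + (lam12 + lam23) • v2 - (lam23 - 1) • v3) ^ 2)) := by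
    match_scalars <;> field_simp <;> ring
  rw [e1, e2, e3, e5, eq_inv_smul_iff₀ ht1, eq_inv_smul_iff₀ (mul_ne_zero ht1 hsum),
    eq_inv_smul_iff₀ ht1, eq_inv_smul_iff₀ ht, eq_inv_smul_iff₀ ht, eq_inv_smul_iff₀ ht]
  constructor
  · rintro ⟨h1, h2, h3⟩
    exact ⟨comb_aux _ _ _ h1 h2 h3 (key_f1 q lam12 lam23 v1 v2 v3),
      comb_aux _ _ _ h1 h2 h3 (key_f2 q lam12 lam23 v1 v2 v3),
      comb_aux _ _ _ h1 h2 h3 (key_f3 q lam12 lam23 v1 v2 v3)⟩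
  · rintro ⟨h1, h2, h3⟩
    have h4 : (4 : ℂ) ≠ 0 := by norm_num
    have hsc : (4 * (lam12 + lam23) ^ 2 : ℂ) ≠ 0 := mul_ne_zero h4 (pow_ne_zero 2 hsum)
    exact ⟨comb_aux2 hsc _ _ _ h1 h2 h3 (key_b1 q lam12 lam23 v1 v2 v3),
      comb_aux2 h4 _ _ _ h1 h2 h3 (key_b2 q lam12 lam23 v1 v2 v3),
      comb_aux2 hsc _ _ _ h1 h2 h3 (key_b3 q lam12 lam23 v1 v2 v3)⟩
end

section
/- In analogy with the classical cross ratio one has: C_{ilkj}·C_{ijkl} = 1 = C_{ijkl}·C_{ilkj}, and C_{ijlk} + C_{ijkl} = 1; moreover, if 1 − C_{ijkl} is invertible, then C_{iklj} = (1 − C_{ijkl})⁻¹, C_{ikjl} = C_{ijkl}·(C_{ijkl} − 1)⁻¹, and C_{iljk} = 1 − C_{ijkl}⁻¹. -/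
section aux
variable {R : Type*} [Ring R]

lemma myInvEq {u x : R} (h1 : u * x = 1) (h2 : x * u = 1) : Ring.inverse u = x := by
  have hu : IsUnit u := ⟨⟨u, x, h1, h2⟩, rfl⟩
  calc Ring.inverse u = Ring.inverse u * (u * x) := by rw [h1, mul_one]
    _ = x := by rw [← mul_assoc, Ring.inverse_mul_cancel _ hu, one_mul]

lemma myInvNeg {u : R} (hu : IsUnit u) : Ring.inverse (-u) = -Ring.inverse u := by
  apply myInvEq <;> simp [Ring.mul_inverse_cancel u hu, Ring.inverse_mul_cancel u hu]

lemma mySwap {a b : R} (hb : IsUnit b) :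
    (b - a) * Ring.inverse b * a = a * Ring.inverse b * (b - a) := by
  calc (b - a) * Ring.inverse b * a
      = b * Ring.inverse b * a - a * Ring.inverse b * a := by noncomm_ring
    _ = a - a * Ring.inverse b * a := by rw [Ring.mul_inverse_cancel b hb, one_mul]
    _ = a * (Ring.inverse b * b) - a * Ring.inverse b * a := by
        rw [Ring.inverse_mul_cancel b hb, mul_one]
    _ = a * Ring.inverse b * (b - a) := by noncomm_ring
end aux

noncomputable def crossRatio {R : Type*} [Ring R] (a b c d : R) : R :=
  (a - d) * Ring.inverse (c - d) * ((c - b) * Ring.inverse (a - b))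

section aux2
variable {R : Type*} [Ring R]

lemma myA {a b c d : R} (hab : IsUnit (a - b)) (hcb : IsUnit (c - b))
    (hcd : IsUnit (c - d)) (had : IsUnit (a - d)) :
    crossRatio a d c b * crossRatio a b c d = 1 := by
  simp only [crossRatio, mul_assoc]
  rw [Ring.inverse_mul_cancel_left _ _ had, Ring.mul_inverse_cancel_left _ _ hcd,
    Ring.inverse_mul_cancel_left _ _ hcb, Ring.mul_inverse_cancel _ hab]

lemma myB {a b c d : R} (hab : IsUnit (a - b)) (hcd : IsUnit (c - d)) :
    crossRatio a b d c + crossRatio a b c d = 1 := by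
  have hdc : (d : R) - c = -(c - d) := by noncomm_ring
  simp only [crossRatio, hdc, myInvNeg hcd]
  set q := Ring.inverse (c - d) with hq
  have h1 : (c - d) * q = 1 := Ring.mul_inverse_cancel _ hcd
  have h2 : q * (c - d) = 1 := Ring.inverse_mul_cancel _ hcd
  have key : (a - c) * -q * (d - b) + (a - d) * q * (c - b) = a - b := by
    calc (a - c) * -q * (d - b) + (a - d) * q * (c - b)
        = (a - d) * (q * (c - d)) + ((c - d) * q) * (d - b) := by noncomm_ring
      _ = a - b := by rw [h1, h2]; noncomm_ring
  calc (a - c) * -q * ((d - b) * Ring.inverse (a - b))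
        + (a - d) * q * ((c - b) * Ring.inverse (a - b))
      = ((a - c) * -q * (d - b) + (a - d) * q * (c - b)) * Ring.inverse (a - b) := by
        noncomm_ring
    _ = 1 := by rw [key, Ring.mul_inverse_cancel _ hab]
end aux2

/-- Proposition 11: the classical identities for the cross ratio. -/
theorem crossRatio_identities {R : Type*} [Ring R] (vi vj vk vl : R)
    (hij : IsUnit (vi - vj)) (hik : IsUnit (vi - vk)) (hil : IsUnit (vi - vl))
    (hjk : IsUnit (vj - vk)) (hjl : IsUnit (vj - vl)) (hkl : IsUnit (vk - vl)) :
    crossRatio vi vl vk vj * crossRatio vi vj vk vl = 1 ∧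
      crossRatio vi vj vk vl * crossRatio vi vl vk vj = 1 ∧
      crossRatio vi vj vl vk + crossRatio vi vj vk vl = 1 ∧
      (IsUnit (1 - crossRatio vi vj vk vl) →
        crossRatio vi vk vl vj = Ring.inverse (1 - crossRatio vi vj vk vl) ∧
        crossRatio vi vk vj vl =
          crossRatio vi vj vk vl * Ring.inverse (crossRatio vi vj vk vl - 1) ∧
        crossRatio vi vl vj vk = 1 - Ring.inverse (crossRatio vi vj vk vl)) := by
  have hkj : IsUnit (vk - vj) := by simpa using hjk.neg
  have hlj : IsUnit (vl - vj) := by simpa using hjl.neg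
  have hlk : IsUnit (vl - vk) := by simpa using hkl.neg
  have p1 : crossRatio vi vl vk vj * crossRatio vi vj vk vl = 1 := myA hij hkj hkl hil
  have p1' : crossRatio vi vj vk vl * crossRatio vi vl vk vj = 1 := myA hil hkl hkj hij
  have p2 : crossRatio vi vj vl vk + crossRatio vi vj vk vl = 1 := myB hij hkl
  refine ⟨p1, p1', p2, fun h4 => ?_⟩
  have hsub : 1 - crossRatio vi vj vk vl = crossRatio vi vj vl vk := by
    rw [← p2]; noncomm_ring
  have q1 : crossRatio vi vj vl vk * crossRatio vi vk vl vj = 1 := myA hik hlk hlj hij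
  have q1' : crossRatio vi vk vl vj * crossRatio vi vj vl vk = 1 := myA hij hlj hlk hik
  have e1 : crossRatio vi vk vl vj = Ring.inverse (1 - crossRatio vi vj vk vl) := by
    rw [hsub]; exact (myInvEq q1 q1').symm
  refine ⟨e1, ?_, ?_⟩
  · have hneg : crossRatio vi vj vk vl - 1 = -(crossRatio vi vj vl vk) := by
      rw [← p2]; noncomm_ring
    rw [hneg, myInvNeg ⟨⟨_, _, q1, q1'⟩, rfl⟩, (myInvEq q1 q1' : _)]
    have M : Ring.inverse (vj - vl) * (vj - vk)
        = -(Ring.inverse (vk - vl) * ((vk - vj) * (Ring.inverse (vl - vj) * (vl - vk)))) := by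
      apply hkl.mul_left_cancel
      rw [mul_neg, Ring.mul_inverse_cancel_left _ _ hkl]
      have hlj' : (vl : R) - vj = -(vj - vl) := by noncomm_ring
      rw [hlj', myInvNeg hjl]
      have hs := mySwap (a := vj - vk) (b := vj - vl) hjl
      have hba : (vj - vl) - (vj - vk) = vk - vl := by noncomm_ring
      calc (vk - vl) * (Ring.inverse (vj - vl) * (vj - vk))
          = ((vj - vl) - (vj - vk)) * Ring.inverse (vj - vl) * (vj - vk) := by
            rw [hba]; noncomm_ring
        _ = (vj - vk) * Ring.inverse (vj - vl) * ((vj - vl) - (vj - vk)) := hs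
        _ = -((vk - vj) * (-Ring.inverse (vj - vl) * (vl - vk))) := by noncomm_ring
    have expand : crossRatio vi vk vj vl
        = (vi - vl) * (Ring.inverse (vj - vl) * (vj - vk)) * Ring.inverse (vi - vk) := by
      simp only [crossRatio]; noncomm_ring
    have expand2 : crossRatio vi vj vk vl * -(crossRatio vi vk vl vj)
        = -((vi - vl) * (Ring.inverse (vk - vl) * ((vk - vj) *
            (Ring.inverse (vl - vj) * ((vl - vk) * Ring.inverse (vi - vk)))))) := by
      simp only [crossRatio, mul_neg, mul_assoc]
      rw [Ring.inverse_mul_cancel_left _ _ hij]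
    rw [expand, M, expand2]
    noncomm_ring
  · have hinvC : Ring.inverse (crossRatio vi vj vk vl) = crossRatio vi vl vk vj :=
      myInvEq p1' p1
    rw [hinvC]
    have hb := myB (a := vi) (b := vl) (c := vk) (d := vj) hil hkj
    rw [← hb]; noncomm_ring
end

section
/- For the cross-ratio elements C_{abcd} := g_{ad}·g_{cd}⁻¹·g_{cb}·g_{ab}⁻¹ (indices pairwise distinct, with g_{ba} := −g_{ab} for a < b), one has C₁₂₃₄ = C₃₄₁₂ and C₂₁₄₃ = q²·C₁₂₃₄. -/
/-!
Conjugating a `q`-commutation relation `u a = c a u` by a unit `u` gives `a u⁻¹ = c u⁻¹ a`, so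
`g₁₄`, `g₂₃`, `g₃₄⁻¹`, `g₁₂⁻¹` commute pairwise up to powers of `q` (with `g₁₄ g₂₃ = g₂₃ g₁₄`).
Reordering each of the cross ratios into `g₂₃ g₁₄ g₃₄⁻¹ g₁₂⁻¹` and comparing the powers of `q`
gives both identities; the signs coming from `g_{ba} = −g_{ab}` agree on both sides.
-/
def QCommute {K R : Type*} [SMul K R] [Mul R] (c : K) (a b : R) : Prop :=
  a * b = c • (b * a)

namespace QCommute

section Semiring

variable {K R : Type*} [CommSemiring K] [Semiring R] [Algebra K R] {c : K} {a b : R}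

theorem mul_right_comm (h : QCommute c a b) (x : R) : x * a * b = c • (x * b * a) := by
  rw [mul_assoc, h, mul_smul_comm, ← mul_assoc]

theorem units_inv_right_of (u : Rˣ) (h : QCommute c (u : R) a) : QCommute c a ↑u⁻¹ := by
  have := congrArg (fun x => (↑u⁻¹ : R) * x * ↑u⁻¹) h
  simpa [QCommute, mul_assoc, mul_smul_comm, smul_mul_assoc] using this

theorem units_inv_left_of (u : Rˣ) (h : QCommute c a (u : R)) : QCommute c (↑u⁻¹ : R) a := by
  have := congrArg (fun x => (↑u⁻¹ : R) * x * ↑u⁻¹) h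
  simpa [QCommute, mul_assoc, mul_smul_comm, smul_mul_assoc] using this

theorem units_inv_right_iff {u : Rˣ} : QCommute c a ↑u⁻¹ ↔ QCommute c (u : R) a :=
  ⟨fun h => by simpa using units_inv_left_of u⁻¹ h, units_inv_right_of u⟩

theorem units_inv_left_iff {u : Rˣ} : QCommute c (↑u⁻¹ : R) a ↔ QCommute c a (u : R) :=
  ⟨fun h => by simpa using units_inv_right_of u⁻¹ h, units_inv_left_of u⟩

end Semiring

theorem symm {K R : Type*} [GroupWithZero K] [Mul R] [MulAction K R] {c : K} {a b : R}
    (hc : c ≠ 0) (h : QCommute c a b) : QCommute c⁻¹ b a := by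
  rw [QCommute, h, smul_smul, inv_mul_cancel₀ hc, one_smul]

end QCommute

section CrossRatio

variable {K R : Type*} [Field K] [Semiring R] [Algebra K R] {q : K} {g12 g14 g23 g34 : Rˣ}

theorem cross_ratio_1234_eq_3412 (hq : q ≠ 0)
    (h6 : QCommute (q ^ 2) (g14 : R) g12) (h12 : QCommute (q ^ 4) (g34 : R) g23)
    (h13 : QCommute (q ^ 6) (g34 : R) g12) (h14 : Commute (g23 : R) g14) :
    (g14 : R) * ↑g34⁻¹ * g23 * ↑g12⁻¹ = g23 * ↑g12⁻¹ * g14 * ↑g34⁻¹ := by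
  have h34_23 : QCommute (q ^ 4)⁻¹ (↑g34⁻¹ : R) g23 :=
    (QCommute.units_inv_right_iff.mpr h12).symm (pow_ne_zero 4 hq)
  have h12_14 : QCommute (q ^ 2) (↑g12⁻¹ : R) g14 := QCommute.units_inv_left_iff.mpr h6
  have h12_34 : QCommute (q ^ 6)⁻¹ (↑g12⁻¹ : R) ↑g34⁻¹ :=
    (QCommute.units_inv_left_iff.mpr (QCommute.units_inv_left_iff.mpr h13)).symm
      (pow_ne_zero 6 hq)
  calc (g14 : R) * ↑g34⁻¹ * g23 * ↑g12⁻¹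
      = (q ^ 4)⁻¹ • ((g23 : R) * g14 * ↑g34⁻¹ * ↑g12⁻¹) := by
        rw [h34_23.mul_right_comm, smul_mul_assoc, h14.eq]
    _ = (q ^ 2 * (q ^ 6)⁻¹) • ((g23 : R) * g14 * ↑g34⁻¹ * ↑g12⁻¹) := by
        congr 1; field_simp
    _ = g23 * ↑g12⁻¹ * g14 * ↑g34⁻¹ := by
        rw [h12_14.mul_right_comm, smul_mul_assoc, h12_34.mul_right_comm, smul_smul]

theorem cross_ratio_2143_eq_smul_1234 (hq : q ≠ 0)
    (h3 : QCommute (q ^ 2) (g34 : R) g14) (h12 : QCommute (q ^ 4) (g34 : R) g23)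
    (h14 : Commute (g23 : R) g14) :
    (g23 : R) * ↑g34⁻¹ * g14 * ↑g12⁻¹ = q ^ 2 • ((g14 : R) * ↑g34⁻¹ * g23 * ↑g12⁻¹) := by
  have h34_14 : QCommute (q ^ 2)⁻¹ (↑g34⁻¹ : R) g14 :=
    (QCommute.units_inv_right_iff.mpr h3).symm (pow_ne_zero 2 hq)
  have h23_34 : QCommute (q ^ 4) (g23 : R) ↑g34⁻¹ := QCommute.units_inv_right_iff.mpr h12
  rw [h34_14.mul_right_comm, smul_mul_assoc, h14.eq, h23_34.mul_right_comm, smul_mul_assoc,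
    smul_smul]
  congr 1; field_simp

end CrossRatio

theorem cross_ratio_symmetries_general {R : Type*} [Ring R] [Algebra ℂ R]
    (q : ℂ) (hq0 : q ≠ 0) (g12 g14 g23 g34 : Rˣ)
    -- rules g_bc g_ac = q² g_ac g_bc for a < b < c
    (h3 : (g34 : R) * g14 = (q ^ 2) • ((g14 : R) * g34))
    -- rules g_ac g_ab = q² g_ab g_ac for a < b < c
    (h6 : (g14 : R) * g12 = (q ^ 2) • ((g12 : R) * g14))
    -- rules g_bc g_ab = q⁴ g_ab g_bc for a < b < c
    (h12 : (g34 : R) * g23 = (q ^ 4) • ((g23 : R) * g34))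
    -- remaining rules
    (h13 : (g34 : R) * g12 = (q ^ 6) • ((g12 : R) * g34))
    (h14 : (g23 : R) * g14 = (g14 : R) * g23) :
    -- C₁₂₃₄ = g₁₄ g₃₄⁻¹ g₃₂ g₁₂⁻¹ with g₃₂ = −g₂₃, etc.
    (g14 : R) * (↑g34⁻¹ : R) * (↑(-g23) : R) * (↑g12⁻¹ : R) =
        (↑(-g23) : R) * (↑g12⁻¹ : R) * (g14 : R) * (↑g34⁻¹ : R) ∧
      (g23 : R) * (↑(-g34)⁻¹ : R) * (↑(-g14) : R) * (↑(-g12)⁻¹ : R) =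
        (q ^ 2) • ((g14 : R) * (↑g34⁻¹ : R) * (↑(-g23) : R) * (↑g12⁻¹ : R)) := by
  simp only [Units.val_neg, inv_neg, neg_mul, mul_neg, neg_neg, smul_neg, neg_inj]
  exact ⟨cross_ratio_1234_eq_3412 hq0 h6 h12 h13 h14, cross_ratio_2143_eq_smul_1234 hq0 h3 h12 h14⟩

/-- For the cross-ratio elements `C_{abcd} = g_{ad}·g_{cd}⁻¹·g_{cb}·g_{ab}⁻¹`
(with `g_{ba} = −g_{ab}`) built from invertible elements satisfying the
commutation rules of the invariants `(ab)`, one has `C₁₂₃₄ = C₃₄₁₂` and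
`C₂₁₄₃ = q²·C₁₂₃₄`. -/
theorem cross_ratio_symmetries {R : Type*} [Ring R] [Algebra ℂ R]
    (q : ℂ) (hq0 : q ≠ 0) (g12 g13 g14 g23 g24 g34 : Rˣ)
    -- rules g_bc g_ac = q² g_ac g_bc for a < b < c
    (h1 : (g23 : R) * g13 = (q ^ 2) • ((g13 : R) * g23))
    (h2 : (g24 : R) * g14 = (q ^ 2) • ((g14 : R) * g24))
    (h3 : (g34 : R) * g14 = (q ^ 2) • ((g14 : R) * g34))
    (h4 : (g34 : R) * g24 = (q ^ 2) • ((g24 : R) * g34))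
    -- rules g_ac g_ab = q² g_ab g_ac for a < b < c
    (h5 : (g13 : R) * g12 = (q ^ 2) • ((g12 : R) * g13))
    (h6 : (g14 : R) * g12 = (q ^ 2) • ((g12 : R) * g14))
    (h7 : (g14 : R) * g13 = (q ^ 2) • ((g13 : R) * g14))
    (h8 : (g24 : R) * g23 = (q ^ 2) • ((g23 : R) * g24))
    -- rules g_bc g_ab = q⁴ g_ab g_bc for a < b < c
    (h9 : (g23 : R) * g12 = (q ^ 4) • ((g12 : R) * g23))
    (h10 : (g24 : R) * g12 = (q ^ 4) • ((g12 : R) * g24))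
    (h11 : (g34 : R) * g13 = (q ^ 4) • ((g13 : R) * g34))
    (h12 : (g34 : R) * g23 = (q ^ 4) • ((g23 : R) * g34))
    -- remaining rules
    (h13 : (g34 : R) * g12 = (q ^ 6) • ((g12 : R) * g34))
    (h14 : (g23 : R) * g14 = (g14 : R) * g23)
    (h15 : (g24 : R) * g13 =
      (q ^ 4) • ((g13 : R) * g24) + (q ^ 6 - q ^ 4) • ((g12 : R) * g34)) :
    -- C₁₂₃₄ = g₁₄ g₃₄⁻¹ g₃₂ g₁₂⁻¹ with g₃₂ = −g₂₃, etc.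
    (g14 : R) * (↑g34⁻¹ : R) * (↑(-g23) : R) * (↑g12⁻¹ : R) =
        (↑(-g23) : R) * (↑g12⁻¹ : R) * (g14 : R) * (↑g34⁻¹ : R) ∧
      (g23 : R) * (↑(-g34)⁻¹ : R) * (↑(-g14) : R) * (↑(-g12)⁻¹ : R) =
        (q ^ 2) • ((g14 : R) * (↑g34⁻¹ : R) * (↑(-g23) : R) * (↑g12⁻¹ : R)) :=
  cross_ratio_symmetries_general q hq0 g12 g14 g23 g34 h3 h6 h12 h13 h14
end
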